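/- Let φ be a Bernstein function. For any multi-index γ and any ξ ∈ ℝ^d \ {0}, |D^γ_ξ φ(|ξ|²)| ≤ C(γ, d) · φ(|ξ|²) · |ξ|^{-|γ|}, where the derivative is computed using D^γ_ξ φ(|ξ|²) = Σ_{|γ|/2 ≤ j ≤ |γ|} φ^{(j)}(|ξ|²) · (polynomial in ξ of degree 2j - |γ|). -/

import Mathlib

open Set
open scoped ContDiff

variable {d : ℕ}

/-- Partial derivative in the `i`-th coordinate direction. -/
noncomputable def pderivE (i : Fin d) (f : EuclideanSpace ℝ (Fin d) → ℝ) :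
    EuclideanSpace ℝ (Fin d) → ℝ :=
  fun x => fderiv ℝ f x (EuclideanSpace.single i 1)

/-- Multi-index partial derivative `D^γ`. -/
noncomputable def mderivE (γ : Fin d → ℕ) (f : EuclideanSpace ℝ (Fin d) → ℝ) :
    EuclideanSpace ℝ (Fin d) → ℝ :=
  (List.finRange d).foldr (fun i g => (pderivE i)^[γ i] g) f

local notation "E" => EuclideanSpace ℝ (Fin d)

theorem iter_smooth (φ : ℝ → ℝ) (hsmooth : ContDiffOn ℝ (⊤ : ℕ∞) φ (Ioi 0)) :
    ∀ j : ℕ, ContDiffOn ℝ (⊤ : ℕ∞) (iteratedDeriv j φ) (Ioi 0) ∧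
      ∀ r > 0, HasDerivAt (iteratedDeriv j φ) (iteratedDeriv (j+1) φ r) r := by
  have key : ∀ ψ : ℝ → ℝ, ContDiffOn ℝ (⊤ : ℕ∞) ψ (Ioi 0) →
      ContDiffOn ℝ (⊤ : ℕ∞) (deriv ψ) (Ioi 0) ∧
      ∀ r > 0, HasDerivAt ψ (deriv ψ r) r := by
    intro ψ hψ
    rw [show (((⊤:ℕ∞) : WithTop ℕ∞)) = ∞ by rfl,
      contDiffOn_infty_iff_deriv_of_isOpen isOpen_Ioi] at hψ
    refine ⟨by exact_mod_cast hψ.2, fun r hr => ?_⟩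
    exact ((hψ.1 r hr).differentiableAt (Ioi_mem_nhds hr)).hasDerivAt
  intro j
  induction j with
  | zero =>
    have h0 : ContDiffOn ℝ (⊤ : ℕ∞) φ (Ioi 0) := hsmooth.of_le (by simp)
    refine ⟨by simpa using h0, fun r hr => ?_⟩
    rw [iteratedDeriv_succ, iteratedDeriv_zero]
    simpa using (key φ h0).2 r hr
  | succ n ih =>
    obtain ⟨h1, _⟩ := ih
    have h2 := key _ h1
    rw [← iteratedDeriv_succ] at h2
    refine ⟨h2.1, fun r hr => ?_⟩
    have h3 := (key _ h2.1).2 r hr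
    rwa [← iteratedDeriv_succ] at h3

lemma normsq_eq (ξ : E) : ‖ξ‖ ^ 2 = ∑ i, ξ i ^ 2 := by
  rw [EuclideanSpace.norm_eq, Real.sq_sqrt (by positivity)]
  simp [Real.norm_eq_abs, sq_abs]

lemma hasFDerivAt_normsq (ξ : E) :
    HasFDerivAt (fun η : E => ‖η‖ ^ 2)
      (∑ m, (2 * ξ m) • (EuclideanSpace.proj m : E →L[ℝ] ℝ)) ξ := by
  have h : (fun η : E => ‖η‖ ^ 2)
      = fun η => ∑ m, (EuclideanSpace.proj m η) ^ 2 := by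
    funext η; simpa using normsq_eq η
  rw [h]
  apply HasFDerivAt.fun_sum
  intro m _
  have h1 : HasDerivAt (fun y : ℝ => y ^ 2) (2 * ξ m) (ξ m) := by
    simpa using hasDerivAt_pow 2 (ξ m)
  have := HasDerivAt.comp_hasFDerivAt (𝕜 := ℝ) (𝕜' := ℝ) ξ h1
    (EuclideanSpace.proj m).hasFDerivAt
  exact this

lemma hasFDerivAt_monomial (α : Fin d → ℕ) (ξ : E) :
    HasFDerivAt (fun η : E => ∏ m, η m ^ α m)
      (∑ m, (∏ l ∈ Finset.univ.erase m, ξ l ^ α l) •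
        ((α m * ξ m ^ (α m - 1)) • (EuclideanSpace.proj m : E →L[ℝ] ℝ))) ξ := by
  have hg : ∀ m ∈ Finset.univ, HasFDerivAt (fun η : E => η m ^ α m)
      ((α m * ξ m ^ (α m - 1)) • (EuclideanSpace.proj m : E →L[ℝ] ℝ)) ξ := by
    intro m _
    have h1 : HasDerivAt (fun y : ℝ => y ^ α m) (α m * ξ m ^ (α m - 1)) (ξ m) :=
      hasDerivAt_pow (α m) (ξ m)
    have := HasDerivAt.comp_hasFDerivAt (𝕜 := ℝ) (𝕜' := ℝ) ξ h1
      (EuclideanSpace.proj m).hasFDerivAt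
    exact this
  simpa using HasFDerivAt.finset_prod hg

lemma prod_update_eq (α : Fin d → ℕ) (i : Fin d) (ξ : E) (n : ℕ) :
    ∏ m, ξ m ^ (Function.update α i n m)
      = ξ i ^ n * ∏ l ∈ Finset.univ.erase i, ξ l ^ α l := by
  rw [← Finset.mul_prod_erase Finset.univ _ (Finset.mem_univ i)]
  rw [Function.update_self]
  congr 1
  apply Finset.prod_congr rfl
  intro m hm
  rw [Function.update_of_ne (Finset.mem_erase.1 hm).1]

lemma prod_add_single (α : Fin d → ℕ) (i : Fin d) (ξ : E) :
    ∏ m, ξ m ^ (α m + if m = i then 1 else 0)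
      = ξ i * ∏ m, ξ m ^ α m := by
  simp only [pow_add, Finset.prod_mul_distrib]
  rw [mul_comm]
  congr 1
  simp [pow_ite, Finset.prod_ite_eq']

lemma pderiv_term_value (φ : ℝ → ℝ) (hsmooth : ContDiffOn ℝ (⊤ : ℕ∞) φ (Ioi 0))
    (j : ℕ) (α : Fin d → ℕ) (i : Fin d) (ξ : E) (hξ : ξ ≠ 0) :
    ∃ L : E →L[ℝ] ℝ,
      HasFDerivAt (fun η : E => iteratedDeriv j φ (‖η‖ ^ 2) * ∏ m, η m ^ α m) L ξ ∧
      L (EuclideanSpace.single i 1)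
        = 2 * (ξ i * (iteratedDeriv (j+1) φ (‖ξ‖ ^ 2) * ∏ m, ξ m ^ α m))
          + (α i : ℝ) *
            (iteratedDeriv j φ (‖ξ‖ ^ 2) * ∏ m, ξ m ^ (Function.update α i (α i - 1) m)) := by
  have hr : (0:ℝ) < ‖ξ‖ ^ 2 := by
    have := norm_pos_iff.mpr hξ; positivity
  have hF : HasFDerivAt (fun η : E => iteratedDeriv j φ (‖η‖ ^ 2))
      (iteratedDeriv (j+1) φ (‖ξ‖ ^ 2) • (∑ m, (2 * ξ m) • (EuclideanSpace.proj m : E →L[ℝ] ℝ))) ξ := by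
    have := HasDerivAt.comp_hasFDerivAt (𝕜 := ℝ) (𝕜' := ℝ) ξ
      ((iter_smooth φ hsmooth j).2 (‖ξ‖ ^ 2) hr) (hasFDerivAt_normsq ξ)
    exact this
  have hM := hasFDerivAt_monomial α ξ
  refine ⟨_, hF.mul hM, ?_⟩
  have hproj : ∀ m : Fin d, (EuclideanSpace.proj m : E →L[ℝ] ℝ)
      (EuclideanSpace.single i 1) = if m = i then 1 else 0 := by
    intro m; simp [EuclideanSpace.single_apply]
  simp only [ContinuousLinearMap.add_apply, ContinuousLinearMap.smul_apply,
    ContinuousLinearMap.sum_apply, hproj, smul_eq_mul, mul_ite, mul_one, mul_zero,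
    Finset.sum_ite_eq', Finset.mem_univ, if_true]
  rw [prod_update_eq]
  ring

def BRep (φ : ℝ → ℝ) (k : ℕ) (g : E → ℝ) : Prop :=
  ∃ (ι : Type) (s : Finset ι) (c : ι → ℝ) (j : ι → ℕ) (α : ι → Fin d → ℕ),
    (∀ a ∈ s, c a ≠ 0 → 2 * j a = k + ∑ i, α a i ∧ j a ≤ k) ∧
    ∀ ξ : E, ξ ≠ 0 →
      g ξ = ∑ a ∈ s, c a * (iteratedDeriv (j a) φ (‖ξ‖ ^ 2) * ∏ m, ξ m ^ α a m)

lemma rep_base (φ : ℝ → ℝ) : BRep (d := d) φ 0 (fun η => φ (‖η‖ ^ 2)) := by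
  refine ⟨Unit, Finset.univ, fun _ => 1, fun _ => 0, fun _ _ => 0, ?_, ?_⟩
  · intro a _ _; simp
  · intro ξ _; simp

lemma rep_step {φ : ℝ → ℝ} (hsmooth : ContDiffOn ℝ (⊤ : ℕ∞) φ (Ioi 0))
    {k : ℕ} {g : E → ℝ} (h : BRep φ k g) (i : Fin d) :
    BRep φ (k + 1) (pderivE i g) := by
  obtain ⟨ι, s, c, j, α, hdeg, hsum⟩ := h
  refine ⟨ι × Bool, s ×ˢ Finset.univ,
    (fun p => if p.2 then 2 * c p.1 else c p.1 * α p.1 i),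
    (fun p => if p.2 then j p.1 + 1 else j p.1),
    (fun p => if p.2 then (fun m => α p.1 m + if m = i then 1 else 0)
      else Function.update (α p.1) i (α p.1 i - 1)), ?_, ?_⟩
  · rintro ⟨a, b⟩ hab hc
    have ha : a ∈ s := (Finset.mem_product.1 hab).1
    cases b with
    | true =>
      simp only [if_true] at hc ⊢
      have hca : c a ≠ 0 := by intro h0; simp [h0] at hc
      obtain ⟨h1, h2⟩ := hdeg a ha hca
      have : ∑ m, (α a m + if m = i then 1 else 0) = (∑ m, α a m) + 1 := by
        rw [Finset.sum_add_distrib]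
        simp [Finset.sum_ite_eq']
      omega
    | false =>
      simp only [if_false, Bool.false_eq_true] at hc ⊢
      have hca : c a ≠ 0 := fun h0 => hc (by simp [h0])
      have hαi : α a i ≠ 0 := by
        intro h0; exact hc (by simp [h0])
      obtain ⟨h1, h2⟩ := hdeg a ha hca
      have hle : α a i ≤ ∑ m, α a m :=
        Finset.single_le_sum (fun m _ => Nat.zero_le _) (Finset.mem_univ i)
      have : ∑ m, Function.update (α a) i (α a i - 1) m = (∑ m, α a m) - 1 := by
        rw [Finset.sum_update_of_mem (Finset.mem_univ i)]
        have := Finset.add_sum_erase Finset.univ (α a) (Finset.mem_univ i)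
        rw [Finset.sdiff_singleton_eq_erase]
        omega
      omega
  · intro ξ hξ
    choose L hL hLval using fun a => pderiv_term_value φ hsmooth (j a) (α a) i ξ hξ
    have hG : HasFDerivAt
        (fun η : E => ∑ a ∈ s, c a * (iteratedDeriv (j a) φ (‖η‖ ^ 2) * ∏ m, η m ^ α a m))
        (∑ a ∈ s, c a • L a) ξ :=
      HasFDerivAt.fun_sum (fun a _ => (hL a).const_mul (c a))
    have heq : pderivE i g ξ = (∑ a ∈ s, c a • L a) (EuclideanSpace.single i 1) := by
      unfold pderivE
      have hev : g =ᶠ[nhds ξ]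
          (fun η : E => ∑ a ∈ s, c a * (iteratedDeriv (j a) φ (‖η‖ ^ 2) * ∏ m, η m ^ α a m)) := by
        filter_upwards [IsOpen.mem_nhds isOpen_compl_singleton hξ] with η hη
        exact hsum η hη
      rw [hev.fderiv_eq, hG.fderiv]
    rw [heq]
    rw [Finset.sum_product]
    simp only [ContinuousLinearMap.sum_apply, ContinuousLinearMap.smul_apply, smul_eq_mul]
    apply Finset.sum_congr rfl
    intro a ha
    rw [hLval a, Fintype.sum_bool]
    simp only [if_true, if_false, Bool.false_eq_true]
    rw [prod_add_single]
    ring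

lemma rep_iterate {φ : ℝ → ℝ} (hsmooth : ContDiffOn ℝ (⊤ : ℕ∞) φ (Ioi 0))
    {k : ℕ} {g : E → ℝ} (h : BRep φ k g) (i : Fin d) (n : ℕ) :
    BRep φ (k + n) ((pderivE i)^[n] g) := by
  induction n with
  | zero => simpa using h
  | succ m ih =>
    rw [Function.iterate_succ_apply']
    exact (Nat.add_assoc k m 1) ▸ rep_step hsmooth ih i

lemma rep_foldr {φ : ℝ → ℝ} (hsmooth : ContDiffOn ℝ (⊤ : ℕ∞) φ (Ioi 0)) (γ : Fin d → ℕ) :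
    ∀ l : List (Fin d),
      BRep φ ((l.map γ).sum)
        (l.foldr (fun i g => (pderivE i)^[γ i] g) (fun η => φ (‖η‖ ^ 2))) := by
  intro l
  induction l with
  | nil => simpa using rep_base φ
  | cons i l ih =>
    have := rep_iterate hsmooth ih i (γ i)
    rw [List.foldr_cons, List.map_cons, List.sum_cons]
    rwa [Nat.add_comm] at this

lemma coord_abs_le_norm (ξ : E) (m : Fin d) : |ξ m| ≤ ‖ξ‖ := by
  have h1 : (ξ m) ^ 2 ≤ ‖ξ‖ ^ 2 := by
    rw [normsq_eq]
    exact Finset.single_le_sum (fun l _ => sq_nonneg (ξ l)) (Finset.mem_univ m)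
  calc |ξ m| = Real.sqrt ((ξ m) ^ 2) := (Real.sqrt_sq_eq_abs _).symm
    _ ≤ Real.sqrt (‖ξ‖ ^ 2) := Real.sqrt_le_sqrt h1
    _ = ‖ξ‖ := Real.sqrt_sq (norm_nonneg ξ)

lemma rep_estimate {φ : ℝ → ℝ} (hφpos : ∀ x > 0, 0 < φ x)
    (hbern : ∀ n : ℕ, 1 ≤ n → ∃ C > 0, ∀ x > 0,
      |x ^ n * iteratedDeriv n φ x| ≤ C * φ x)
    {k : ℕ} {g : E → ℝ} (h : BRep φ k g) :
    ∃ C > 0, ∀ ξ : E, ξ ≠ 0 → |g ξ| ≤ C * φ (‖ξ‖ ^ 2) * ‖ξ‖ ^ (-(k : ℝ)) := by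
  obtain ⟨ι, s, c, j, α, hdeg, hsum⟩ := h
  have h2 : ∀ n : ℕ, ∃ C > 0, ∀ x > 0, |iteratedDeriv n φ x| * x ^ n ≤ C * φ x := by
    intro n
    rcases Nat.eq_zero_or_pos n with h0 | h1
    · exact ⟨1, one_pos, fun x hx => by
        simp [h0, abs_of_pos (hφpos x hx)]⟩
    · obtain ⟨C, hC, hb⟩ := hbern n h1
      refine ⟨C, hC, fun x hx => ?_⟩
      have := hb x hx
      rwa [abs_mul, abs_of_pos (pow_pos hx n), mul_comm] at this
  choose C0 hC0pos hC0 using h2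
  have hsum0 : 0 ≤ ∑ a ∈ s, |c a| * C0 (j a) :=
    Finset.sum_nonneg (fun a _ => mul_nonneg (abs_nonneg _) (hC0pos _).le)
  refine ⟨1 + ∑ a ∈ s, |c a| * C0 (j a), by linarith, fun ξ hξ => ?_⟩
  have ht : (0:ℝ) < ‖ξ‖ := norm_pos_iff.mpr hξ
  have hr : (0:ℝ) < ‖ξ‖ ^ 2 := by positivity
  have hφr : 0 < φ (‖ξ‖ ^ 2) := hφpos _ hr
  have hrp : (0:ℝ) < ‖ξ‖ ^ (-(k:ℝ)) := Real.rpow_pos_of_pos ht _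
  rw [hsum ξ hξ]
  calc |∑ a ∈ s, c a * (iteratedDeriv (j a) φ (‖ξ‖ ^ 2) * ∏ m, ξ m ^ α a m)|
      ≤ ∑ a ∈ s, |c a * (iteratedDeriv (j a) φ (‖ξ‖ ^ 2) * ∏ m, ξ m ^ α a m)| :=
        Finset.abs_sum_le_sum_abs _ _
    _ ≤ ∑ a ∈ s, |c a| * C0 (j a) * (φ (‖ξ‖ ^ 2) * ‖ξ‖ ^ (-(k:ℝ))) := by
        apply Finset.sum_le_sum
        intro a ha
        rcases eq_or_ne (c a) 0 with hc | hc
        · simp only [hc, zero_mul, abs_zero]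
          positivity
        obtain ⟨h1, _⟩ := hdeg a ha hc
        rw [abs_mul, abs_mul, mul_assoc]
        apply mul_le_mul_of_nonneg_left ?_ (abs_nonneg (c a))
        -- |D| * |M| ≤ C0 * (φ r * t^{-k})
        have hM : |∏ m, ξ m ^ α a m| ≤ ‖ξ‖ ^ (∑ m, α a m) := by
          rw [Finset.abs_prod, ← Finset.prod_pow_eq_pow_sum]
          apply Finset.prod_le_prod (fun m _ => abs_nonneg _)
          intro m _
          rw [abs_pow]
          exact pow_le_pow_left₀ (abs_nonneg _) (coord_abs_le_norm ξ m) _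
        have hD : |iteratedDeriv (j a) φ (‖ξ‖ ^ 2)| * ‖ξ‖ ^ (2 * j a)
            ≤ C0 (j a) * φ (‖ξ‖ ^ 2) := by
          have := hC0 (j a) (‖ξ‖ ^ 2) hr
          rwa [← pow_mul] at this
        have hsplit : ‖ξ‖ ^ (∑ m, α a m) = ‖ξ‖ ^ (2 * j a) * ‖ξ‖ ^ (-(k:ℝ)) := by
          rw [← Real.rpow_natCast ‖ξ‖ (∑ m, α a m), ← Real.rpow_natCast ‖ξ‖ (2 * j a),
            ← Real.rpow_add ht]
          congr 1
          have : ((2 * j a : ℕ) : ℝ) = (k : ℝ) + ((∑ m, α a m : ℕ) : ℝ) := by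
            exact_mod_cast congrArg (Nat.cast : ℕ → ℝ) h1
          linarith
        calc |iteratedDeriv (j a) φ (‖ξ‖ ^ 2)| * |∏ m, ξ m ^ α a m|
            ≤ |iteratedDeriv (j a) φ (‖ξ‖ ^ 2)| * (‖ξ‖ ^ (2 * j a) * ‖ξ‖ ^ (-(k:ℝ))) := by
              rw [← hsplit]
              exact mul_le_mul_of_nonneg_left hM (abs_nonneg _)
          _ = (|iteratedDeriv (j a) φ (‖ξ‖ ^ 2)| * ‖ξ‖ ^ (2 * j a)) * ‖ξ‖ ^ (-(k:ℝ)) := by ring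
          _ ≤ (C0 (j a) * φ (‖ξ‖ ^ 2)) * ‖ξ‖ ^ (-(k:ℝ)) :=
              mul_le_mul_of_nonneg_right hD (le_of_lt hrp)
          _ = C0 (j a) * (φ (‖ξ‖ ^ 2) * ‖ξ‖ ^ (-(k:ℝ))) := by ring
    _ = (∑ a ∈ s, |c a| * C0 (j a)) * (φ (‖ξ‖ ^ 2) * ‖ξ‖ ^ (-(k:ℝ))) := by
        rw [Finset.sum_mul]
    _ ≤ (1 + ∑ a ∈ s, |c a| * C0 (j a)) * (φ (‖ξ‖ ^ 2) * ‖ξ‖ ^ (-(k:ℝ))) := by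
        apply mul_le_mul_of_nonneg_right (by linarith) (by positivity)
    _ = (1 + ∑ a ∈ s, |c a| * C0 (j a)) * φ (‖ξ‖ ^ 2) * ‖ξ‖ ^ (-(k:ℝ)) := by ring

theorem stmt_8 (d : ℕ) (φ : ℝ → ℝ) (hφpos : ∀ x > 0, 0 < φ x)
    (hsmooth : ContDiffOn ℝ (⊤ : ℕ∞) φ (Ioi 0))
    (hsign : ∀ k : ℕ, ∀ x > 0, 0 ≤ (-1 : ℝ) ^ k * iteratedDeriv (k + 1) φ x)
    (hbern : ∀ n : ℕ, 1 ≤ n → ∃ C > 0, ∀ x > 0,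
      |x ^ n * iteratedDeriv n φ x| ≤ C * φ x) :
    ∀ γ : Fin d → ℕ, ∃ C > 0, ∀ ξ : EuclideanSpace ℝ (Fin d), ξ ≠ 0 →
      |mderivE γ (fun η => φ (‖η‖ ^ 2)) ξ|
        ≤ C * φ (‖ξ‖ ^ 2) * ‖ξ‖ ^ (-(∑ i, γ i : ℝ)) := by
  intro γ
  have hrep : BRep φ (∑ i, γ i) (mderivE γ (fun η => φ (‖η‖ ^ 2))) := by
    unfold mderivE
    rw [Fin.sum_univ_def γ]
    exact rep_foldr hsmooth γ (List.finRange d)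
  obtain ⟨C, hC, hb⟩ := rep_estimate hφpos hbern hrep
  refine ⟨C, hC, fun ξ hξ => ?_⟩
  have hb2 := hb ξ hξ
  rwa [Nat.cast_sum] at hb2
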